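/- arXiv:2006.01705 — 3 statements merged into one kernel-verified Lean document; each statement's English description precedes it below -/
import Mathlib

section
/- Let (A, d, h) be a curved algebra and let HA = A⟨η⟩ be the graded algebra obtained by freely adjoining a degree-1 generator η. Define a derivation d^H on HA by d^H(a) = d(a) − [η, a] for a ∈ A and d^H(η) = h − η². Then (d^H)² = 0 on HA, i.e. HA is a dg algebra. -/
open scoped TensorProduct

variable {k : Type} [Field k]

/-- A (ℤ-)graded algebra presented by a family of submodules: the unit is in degree 0,
the product of degree `i` and degree `j` elements has degree `i + j`, and the submodules
form an internal direct sum decomposition. -/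
def IsGradedAlg {A : Type} [Ring A] [Algebra k A] (𝒜 : ℤ → Submodule k A) : Prop :=
  (1 : A) ∈ 𝒜 0 ∧ (∀ i j : ℤ, ∀ x ∈ 𝒜 i, ∀ y ∈ 𝒜 j, x * y ∈ 𝒜 (i + j)) ∧
    DirectSum.IsInternal 𝒜

/-- A degree 1 (odd) derivation of the graded algebra `(A, 𝒜)`. -/
def IsDerOne {A : Type} [Ring A] [Algebra k A] (𝒜 : ℤ → Submodule k A)
    (d : A →ₗ[k] A) : Prop :=
  (∀ i : ℤ, ∀ x ∈ 𝒜 i, d x ∈ 𝒜 (i + 1)) ∧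
  (∀ i : ℤ, ∀ x ∈ 𝒜 i, ∀ y : A, d (x * y) = d x * y + ((-1 : k) ^ i) • (x * d y))

/-- A curved algebra `(A, d, h)`: a graded algebra with a degree 1 derivation `d`
and a curvature element `h` of degree 2 such that `d² = [h, -]` and `d h = 0`. -/
def IsCurvedAlg {A : Type} [Ring A] [Algebra k A] (𝒜 : ℤ → Submodule k A)
    (d : A →ₗ[k] A) (h : A) : Prop :=
  IsGradedAlg 𝒜 ∧ IsDerOne 𝒜 d ∧ h ∈ 𝒜 2 ∧
    (∀ x : A, d (d x) = h * x - x * h) ∧ d h = 0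

/-- A morphism `(f, b)` of curved algebras: a degree 0 algebra map `f` together with a
degree 1 element `b` of the target such that `f ∘ d_A = d_B ∘ f + [b, f(-)]` and
`f h_A = h_B + d_B b + b²`. -/
def IsCurvedMor {A B : Type} [Ring A] [Algebra k A] [Ring B] [Algebra k B]
    (𝒜 : ℤ → Submodule k A) (dA : A →ₗ[k] A) (hA : A)
    (ℬ : ℤ → Submodule k B) (dB : B →ₗ[k] B) (hB : B)
    (f : A →ₐ[k] B) (b : B) : Prop :=
  (∀ i : ℤ, ∀ x ∈ 𝒜 i, f x ∈ ℬ i) ∧ b ∈ ℬ 1 ∧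
  (∀ i : ℤ, ∀ x ∈ 𝒜 i, f (dA x) = dB (f x) + (b * f x - ((-1 : k) ^ i) • (f x * b))) ∧
  f hA = hB + dB b + b * b

/-- for a curved algebra `(A, d, h)`, the uncurving `HA = A⟨η⟩`
(here presented as a graded algebra `H` together with the structure map `ι : A → H`
and the freely adjoined degree 1 generator `η`, so that `H` is generated by `ι(A)` and `η`)
with the derivation `d^H` determined by `d^H(a) = d a - [η, a]` and `d^H(η) = h - η²`
satisfies `(d^H)² = 0`, i.e. `HA` is a dg algebra. -/
theorem uncurving_is_dg
    {A H : Type} [Ring A] [Algebra k A] [Ring H] [Algebra k H]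
    (𝒜 : ℤ → Submodule k A) (d : A →ₗ[k] A) (h : A)
    (hcA : IsCurvedAlg 𝒜 d h)
    (ℋ : ℤ → Submodule k H) (hgr : IsGradedAlg ℋ)
    (ι : A →ₐ[k] H) (hι : ∀ i : ℤ, ∀ x ∈ 𝒜 i, ι x ∈ ℋ i)
    (η : H) (hη : η ∈ ℋ 1)
    (D : H →ₗ[k] H) (hD : IsDerOne ℋ D)
    (hDι : ∀ i : ℤ, ∀ a ∈ 𝒜 i, D (ι a) = ι (d a) - (η * ι a - ((-1 : k) ^ i) • (ι a * η)))
    (hDη : D η = ι h - η * η)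
    (hgen : Algebra.adjoin k (Set.range ι ∪ {η}) = ⊤) :
    ∀ z : H, D (D z) = 0 := by
  obtain ⟨⟨-, -, hAint⟩, ⟨hd_deg, -⟩, hh2, hd2, hdh⟩ := hcA
  obtain ⟨hH1, -, hHint⟩ := hgr
  obtain ⟨hD_deg, hD_leib⟩ := hD
  have sq' : ∀ i : ℤ, ∀ x : H, ((-1 : k) ^ i) • ((-1 : k) ^ i) • x = x := by
    intro i x
    rw [smul_smul, ← mul_zpow]
    norm_num
  have neg1 : ∀ i : ℤ, ((-1 : k) ^ (i + 1)) = -((-1 : k) ^ i) := by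
    intro i; rw [zpow_add₀ (by norm_num : (-1 : k) ≠ 0), zpow_one, mul_neg_one]
  have e1 : ((-1 : k) ^ (1 : ℤ)) = -1 := by norm_num
  have e2 : ((-1 : k) ^ (2 : ℤ)) = 1 := by norm_num
  -- D 1 = 0
  have hD1 : D (1 : H) = 0 := by
    have := hD_leib 0 1 hH1 1
    simp only [one_mul, zpow_zero, one_smul, mul_one] at this
    exact add_eq_left.mp this.symm
  -- D² is an (unsigned) derivation
  have leib2 : ∀ x y : H, D (D (x * y)) = D (D x) * y + x * D (D y) := by
    intro x
    have hx : x ∈ ⨆ i, ℋ i := by rw [hHint.submodule_iSup_eq_top]; trivial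
    refine Submodule.iSup_induction ℋ
      (motive := fun x => ∀ y : H, D (D (x * y)) = D (D x) * y + x * D (D y)) hx
      (fun i u hui y => ?_) (fun y => by simp) (fun u v hu hv y => ?_)
    · rw [hD_leib i u hui y, map_add, map_smul,
        hD_leib (i + 1) (D u) (hD_deg i u hui) y, hD_leib i u hui (D y),
        neg1, smul_add, sq', neg_smul]
      abel
    · show D (D ((u + v) * y)) = D (D (u + v)) * y + (u + v) * D (D y)
      simp only [add_mul, map_add, hu y, hv y]
      abel
  -- D² vanishes on η
  have key_η : D (D η) = 0 := by
    rw [hDη, map_sub, hDι 2 h hh2, hdh, map_zero, hD_leib 1 η hη η, hDη, e1, e2,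
      one_smul, neg_one_smul]
    noncomm_ring
  -- D² vanishes on homogeneous elements of ι(A)
  have key_ι : ∀ i : ℤ, ∀ a ∈ 𝒜 i, D (D (ι a)) = 0 := by
    intro i a ha
    rw [hDι i a ha, map_sub, map_sub, map_smul,
      hDι (i + 1) (d a) (hd_deg i a ha), hd2 a, map_sub, map_mul, map_mul,
      hD_leib 1 η hη (ι a), hD_leib i (ι a) (hι i a ha) η,
      hDι i a ha, hDη, neg1, e1, neg_one_smul]
    simp only [smul_sub, smul_add, sub_mul, mul_sub, add_mul, mul_add, neg_smul,
      smul_mul_assoc, mul_smul_comm, sq', mul_assoc]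
    abel
  -- D² vanishes on all of ι(A)
  have key_A : ∀ a : A, D (D (ι a)) = 0 := by
    intro a
    have hx : a ∈ ⨆ i, 𝒜 i := by rw [hAint.submodule_iSup_eq_top]; trivial
    refine Submodule.iSup_induction 𝒜 (motive := fun a => D (D (ι a)) = 0) hx key_ι
      (by simp) (fun u v hu hv => ?_)
    show D (D (ι (u + v))) = 0
    simp only [map_add] at hu hv ⊢
    rw [hu, hv, add_zero]
  intro z
  have hz : z ∈ Algebra.adjoin k (Set.range ι ∪ {η}) := by rw [hgen]; trivial
  refine Algebra.adjoin_induction (fun x hx => ?_) (fun r => ?_)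
    (fun x y _ _ hx hy => ?_) (fun x y _ _ hx hy => ?_) hz
  · rcases hx with ⟨a, rfl⟩ | rfl
    · exact key_A a
    · exact key_η
  · simp [Algebra.algebraMap_eq_smul_one, hD1]
  · rw [map_add, map_add, hx, hy, add_zero]
  · rw [leib2, hx, hy, zero_mul, mul_zero, add_zero]
end

section
/- Let (f,b): A → B be a morphism of curved algebras. Define f_b: HA → HB on generators by f_b(a) = f(a) for a ∈ A and f_b(η_A) = b + η_B. Then f_b is a morphism of dg algebras, i.e. d^{HB} ∘ f_b = f_b ∘ d^{HA}. -/
open scoped TensorProduct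

variable {k : Type} [Field k]

/-- for a morphism `(f, b) : A → B` of curved algebras, the induced map
`f_b : HA → HB` between the uncurvings, determined on generators by `f_b(a) = f(a)` and
`f_b(η_A) = b + η_B`, is a morphism of dg algebras, i.e. `d^{HB} ∘ f_b = f_b ∘ d^{HA}`.
Here the uncurvings `HA`, `HB` are presented as graded algebras with structure maps
`ιA, ιB`, freely adjoined degree 1 generators `ηA, ηB`, and the uncurved differentials. -/
theorem uncurving_map_is_dg
    {A B HA HB : Type} [Ring A] [Algebra k A] [Ring B] [Algebra k B]
    [Ring HA] [Algebra k HA] [Ring HB] [Algebra k HB]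
    (𝒜 : ℤ → Submodule k A) (dA : A →ₗ[k] A) (hA : A) (hcA : IsCurvedAlg 𝒜 dA hA)
    (ℬ : ℤ → Submodule k B) (dB : B →ₗ[k] B) (hB : B) (hcB : IsCurvedAlg ℬ dB hB)
    (f : A →ₐ[k] B) (b : B) (hf : IsCurvedMor 𝒜 dA hA ℬ dB hB f b)
    -- the uncurving HA of A
    (ℋA : ℤ → Submodule k HA) (hgrA : IsGradedAlg ℋA)
    (ιA : A →ₐ[k] HA) (hιA : ∀ i : ℤ, ∀ x ∈ 𝒜 i, ιA x ∈ ℋA i)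
    (ηA : HA) (hηA : ηA ∈ ℋA 1)
    (DA : HA →ₗ[k] HA) (hDA : IsDerOne ℋA DA)
    (hDAι : ∀ i : ℤ, ∀ a ∈ 𝒜 i, DA (ιA a) = ιA (dA a) - (ηA * ιA a - ((-1 : k) ^ i) • (ιA a * ηA)))
    (hDAη : DA ηA = ιA hA - ηA * ηA)
    (hgenA : Algebra.adjoin k (Set.range ιA ∪ {ηA}) = ⊤)
    -- the uncurving HB of B
    (ℋB : ℤ → Submodule k HB) (hgrB : IsGradedAlg ℋB)
    (ιB : B →ₐ[k] HB) (hιB : ∀ i : ℤ, ∀ x ∈ ℬ i, ιB x ∈ ℋB i)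
    (ηB : HB) (hηB : ηB ∈ ℋB 1)
    (DB : HB →ₗ[k] HB) (hDB : IsDerOne ℋB DB)
    (hDBι : ∀ i : ℤ, ∀ x ∈ ℬ i, DB (ιB x) = ιB (dB x) - (ηB * ιB x - ((-1 : k) ^ i) • (ιB x * ηB)))
    (hDBη : DB ηB = ιB hB - ηB * ηB)
    -- f_b : HA → HB, determined on generators
    (φ : HA →ₐ[k] HB) (hφdeg : ∀ i : ℤ, ∀ z ∈ ℋA i, φ z ∈ ℋB i)
    (hφι : φ.comp ιA = ιB.comp f) (hφη : φ ηA = ιB b + ηB) :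
    DB.comp φ.toLinearMap = φ.toLinearMap.comp DA := by
  obtain ⟨hmapdeg, hbdeg, hfd, hfh⟩ := hf
  set δ : HA →ₗ[k] HB := DB.comp φ.toLinearMap - φ.toLinearMap.comp DA with hδdef
  have hδ : ∀ z : HA, δ z = DB (φ z) - φ (DA z) := fun z => rfl
  have hφι' : ∀ a : A, φ (ιA a) = ιB (f a) := fun a => by
    have := congrArg (fun g : A →ₐ[k] HB => g a) hφι
    simpa using this
  -- Leibniz rule for δ
  have leib : ∀ i : ℤ, ∀ z ∈ ℋA i, ∀ y : HA,
      δ (z * y) = δ z * φ y + ((-1 : k) ^ i) • (φ z * δ y) := by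
    intro i z hz y
    simp only [hδ, map_mul]
    rw [hDB.2 i (φ z) (hφdeg i z hz) (φ y), hDA.2 i z hz y]
    simp only [map_add, map_smul, map_mul]
    simp only [sub_mul, mul_sub, smul_sub]
    module
  -- δ vanishes on ιA of homogeneous elements
  have hδι : ∀ i : ℤ, ∀ a ∈ 𝒜 i, δ (ιA a) = 0 := by
    intro i a ha
    rw [hδ, hDAι i a ha]
    rw [map_sub, map_sub, map_mul, map_smul, map_mul, hφι' a, hφι' (dA a), hφη,
      hDBι i (f a) (hmapdeg i a ha), hfd i a ha]
    simp only [map_add, map_sub, map_smul, map_mul]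
    simp only [add_mul, mul_add, smul_add, smul_sub, sub_mul, mul_sub]
    module
  -- δ vanishes on ηA
  have hδη : δ ηA = 0 := by
    rw [hδ, hφη, hDAη, map_add, hDBι 1 b hbdeg, hDBη, map_sub, map_mul, hφι' hA, hφη, hfh]
    simp only [map_add, map_mul, zpow_one, neg_smul, one_smul, sub_neg_eq_add]
    simp only [add_mul, mul_add]
    module
  -- δ vanishes at 1
  have hDA1 : DA (1 : HA) = 0 := by
    have h1 := hDA.2 0 1 hgrA.1 1
    simp only [mul_one, one_mul, zpow_zero, one_smul] at h1
    exact right_eq_add.mp h1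
  have hDB1 : DB (1 : HB) = 0 := by
    have h1 := hDB.2 0 1 hgrB.1 1
    simp only [mul_one, one_mul, zpow_zero, one_smul] at h1
    exact right_eq_add.mp h1
  have hδ1 : δ (1 : HA) = 0 := by
    rw [hδ, map_one, hDA1, map_zero, sub_zero, hDB1]
  -- the subalgebra where δ vanishes multiplicatively
  let S : Subalgebra k HA :=
    { carrier := {z | δ z = 0 ∧ ∀ y : HA, δ y = 0 → δ (z * y) = 0}
      mul_mem' := fun {z w} hz hw => ⟨hz.2 w hw.1, fun y hy => by
        rw [mul_assoc]; exact hz.2 _ (hw.2 y hy)⟩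
      add_mem' := fun {z w} hz hw => ⟨by rw [map_add, hz.1, hw.1, add_zero],
        fun y hy => by rw [add_mul, map_add, hz.2 y hy, hw.2 y hy, add_zero]⟩
      one_mem' := ⟨hδ1, fun y hy => by rw [one_mul]; exact hy⟩
      algebraMap_mem' := fun c => ⟨by
          rw [Algebra.algebraMap_eq_smul_one, map_smul, hδ1, smul_zero],
        fun y hy => by
          rw [Algebra.algebraMap_eq_smul_one, smul_mul_assoc, one_mul, map_smul, hy,
            smul_zero]⟩ }
  have hηS : ηA ∈ S := ⟨hδη, fun y hy => by
    rw [leib 1 ηA hηA y, hδη, hy, zero_mul, mul_zero, smul_zero, add_zero]⟩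
  have hιS : ∀ a : A, ιA a ∈ S := by
    intro a
    let S' : Submodule k A :=
      { carrier := {a | ιA a ∈ S}
        add_mem' := fun {x y} hx hy => by
          show ιA (x + y) ∈ S
          rw [map_add]; exact add_mem hx hy
        zero_mem' := by
          show ιA (0 : A) ∈ S
          rw [map_zero]; exact zero_mem S
        smul_mem' := fun c x hx => by
          show ιA (c • x) ∈ S
          rw [map_smul]; exact S.smul_mem hx c }
    have hle : ∀ i : ℤ, 𝒜 i ≤ S' := by
      intro i x hx
      exact ⟨hδι i x hx, fun y hy => by
        rw [leib i (ιA x) (hιA i x hx) y, hδι i x hx, hy, zero_mul, mul_zero, smul_zero,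
          add_zero]⟩
    have htop : (⊤ : Submodule k A) ≤ S' := by
      rw [← hcA.1.2.2.submodule_iSup_eq_top]
      exact iSup_le hle
    exact htop Submodule.mem_top
  have hall : ∀ z : HA, δ z = 0 := by
    intro z
    have hsub : Algebra.adjoin k (Set.range ιA ∪ {ηA}) ≤ S := Algebra.adjoin_le (by
      rintro x (⟨a, rfl⟩ | rfl)
      · exact hιS a
      · exact hηS)
    have hz : z ∈ Algebra.adjoin k (Set.range ιA ∪ {ηA}) := by
      rw [hgenA]; trivial
    exact (hsub hz).1
  have hzero : δ = 0 := LinearMap.ext fun z => hall z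
  rw [hδdef] at hzero
  exact sub_eq_zero.mp hzero
end

section
/- The uncurving functor is left adjoint to the inclusion of dg algebras into curved algebras: for a curved algebra A and a dg algebra B (viewed as a curved algebra with zero curvature), there is a natural bijection between dg algebra maps HA → B and curved algebra morphisms (f,b): A → B. Explicitly, a dg map φ: HA → B corresponds to the pair (φ|_A, φ(η)). -/
open scoped TensorProduct

variable {k : Type} [Field k]

theorem homog_mem_of_mem_iSup {M : Type} [AddCommGroup M] [Module k M]
    (ℋ : ℤ → Submodule k M) (hind : iSupIndep ℋ) (P : ℤ → Submodule k M)
    (hP : ∀ j, P j ≤ ℋ j) {i : ℤ} {z : M} (hz : z ∈ ℋ i) (hzS : z ∈ ⨆ j, P j) :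
    z ∈ P i := by
  classical
  obtain ⟨c, hc, hsum⟩ := (Submodule.mem_iSup_iff_exists_finsupp P z).mp hzS
  have herase : z - c i = ((c.erase i).sum fun _ x => x) := by
    have h1 : c.erase i + Finsupp.single i (c i) = c := Finsupp.erase_add_single i c
    have h2 : ((c.erase i + Finsupp.single i (c i)).sum fun _ x => x) = z := by
      rw [h1, hsum]
    rw [Finsupp.sum_add_index' (fun _ => rfl) (fun _ _ _ => rfl)] at h2
    rw [Finsupp.sum_single_index rfl] at h2
    linear_combination (norm := abel) -h2
  have hmem1 : z - c i ∈ ℋ i := Submodule.sub_mem _ hz (hP i (hc i))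
  have hmem2 : z - c i ∈ ⨆ (j) (_ : j ≠ i), ℋ j := by
    rw [herase]
    refine Submodule.sum_mem _ fun j hj => ?_
    have hji : j ≠ i := by
      intro hEq; subst hEq
      simp at hj
    have : c.erase i j = c j := Finsupp.erase_ne hji
    rw [this]
    exact Submodule.mem_iSup_of_mem j (Submodule.mem_iSup_of_mem hji (hP j (hc j)))
  have h0 : z - c i = 0 := (Submodule.disjoint_def.mp (hind i)) _ hmem1 hmem2
  have hzc : z = c i := by linear_combination (norm := abel) h0
  rw [hzc]; exact hc i

/-- the uncurving functor is left adjoint to the inclusion of dg algebras into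
curved algebras. For a curved algebra `A` with uncurving `HA = A⟨η⟩` (presented with its
structure map `ι`, free degree 1 generator `η` — freeness expressed by the universal
property `hUP` — and the uncurved differential `D`) and a dg algebra `B` (a curved algebra
with zero curvature), the assignment `φ ↦ (φ ∘ ι, φ η)` identifies dg algebra maps
`HA → B` with curved algebra morphisms `A → B`: it is well defined, and every curved
morphism `(f, b)` arises from a unique dg map `φ`. -/
theorem uncurving_adjunction
    {A H B : Type} [Ring A] [Algebra k A] [Ring H] [Algebra k H] [Ring B] [Algebra k B]
    (𝒜 : ℤ → Submodule k A) (d : A →ₗ[k] A) (h : A) (hcA : IsCurvedAlg 𝒜 d h)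
    (ℋ : ℤ → Submodule k H) (hgr : IsGradedAlg ℋ)
    (ι : A →ₐ[k] H) (hι : ∀ i : ℤ, ∀ x ∈ 𝒜 i, ι x ∈ ℋ i)
    (η : H) (hη : η ∈ ℋ 1)
    (D : H →ₗ[k] H) (hD : IsDerOne ℋ D)
    (hDι : ∀ i : ℤ, ∀ a ∈ 𝒜 i, D (ι a) = ι (d a) - (η * ι a - ((-1 : k) ^ i) • (ι a * η)))
    (hDη : D η = ι h - η * η)
    (hgen : Algebra.adjoin k (Set.range ι ∪ {η}) = ⊤)
    -- freeness of the adjunction of η: universal property of `H = A⟨η⟩`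
    (hUP : ∀ (W : Type) [Ring W] [Algebra k W] (𝒲 : ℤ → Submodule k W),
      IsGradedAlg 𝒲 → ∀ g : A →ₐ[k] W, (∀ i : ℤ, ∀ x ∈ 𝒜 i, g x ∈ 𝒲 i) →
      ∀ w ∈ 𝒲 1, ∃! φ : H →ₐ[k] W, φ.comp ι = g ∧ φ η = w)
    -- B is a dg algebra, i.e. a curved algebra with zero curvature
    (ℬ : ℤ → Submodule k B) (dB : B →ₗ[k] B) (hcB : IsCurvedAlg ℬ dB 0) :
    -- a dg map φ : HA → B gives the curved morphism (φ ∘ ι, φ η)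
    (∀ φ : H →ₐ[k] B, (∀ i : ℤ, ∀ z ∈ ℋ i, φ z ∈ ℬ i) →
      dB.comp φ.toLinearMap = φ.toLinearMap.comp D →
      IsCurvedMor 𝒜 d h ℬ dB 0 (φ.comp ι) (φ η)) ∧
    -- conversely, every curved morphism (f, b) : A → B comes from a unique dg map φ : HA → B
    (∀ (f : A →ₐ[k] B) (b : B), IsCurvedMor 𝒜 d h ℬ dB 0 f b →
      ∃! φ : H →ₐ[k] B,
        dB.comp φ.toLinearMap = φ.toLinearMap.comp D ∧ φ.comp ι = f ∧ φ η = b) := by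
  obtain ⟨⟨hA1, hAmul, hAint⟩, hAder, hAh2, hAd2, hAdh⟩ := hcA
  obtain ⟨hH1, hHmul, hHint⟩ := hgr
  obtain ⟨⟨hB1, hBmul, hBint⟩, hBder, -, -, -⟩ := hcB
  have hιd : ∀ i : ℤ, ∀ a ∈ 𝒜 i,
      ι (d a) = D (ι a) + (η * ι a - ((-1 : k) ^ i) • (ι a * η)) := by
    intro i a ha; rw [hDι i a ha]; abel
  have hιh : ι h = D η + η * η := by rw [hDη]; abel
  constructor
  · -- forward direction
    intro φ hφgr hφd
    have hφd' : ∀ z : H, dB (φ z) = φ (D z) := fun z => LinearMap.congr_fun hφd z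
    refine ⟨fun i x hx => hφgr i _ (hι i x hx), hφgr 1 η hη, ?_, ?_⟩
    · intro i x hx
      simp only [AlgHom.comp_apply]
      rw [hιd i x hx, map_add, map_sub, map_mul, map_smul, map_mul, ← hφd']
    · simp only [AlgHom.comp_apply]
      rw [hιh, map_add, map_mul, ← hφd', zero_add]
  · -- backward direction
    intro f b hfb
    obtain ⟨hfgr, hb1, hfd, hfh⟩ := hfb
    obtain ⟨φ, ⟨hφι, hφη⟩, hφuniq⟩ := hUP B ℬ ⟨hB1, hBmul, hBint⟩ f hfgr b hb1
    have hφι' : ∀ a : A, φ (ι a) = f a := fun a => AlgHom.congr_fun hφι a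
    -- grading preservation of φ
    have hφgr : ∀ i : ℤ, ∀ z ∈ ℋ i, φ z ∈ ℬ i := by
      set S : Submodule k H := ⨆ j : ℤ, (ℋ j ⊓ (ℬ j).comap φ.toLinearMap) with hSdef
      have hhom : ∀ j : ℤ, ∀ z ∈ ℋ j, φ z ∈ ℬ j → z ∈ S :=
        fun j z hz hz' => Submodule.mem_iSup_of_mem j ⟨hz, hz'⟩
      have h1S : (1 : H) ∈ S := hhom 0 1 hH1 (by rw [map_one]; exact hB1)
      have hmulS : ∀ x y : H, x ∈ S → y ∈ S → x * y ∈ S := by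
        intro x y hx hy
        refine Submodule.iSup_induction (motive := fun x => ∀ y ∈ S, x * y ∈ S) _ hx
          (fun i x' hx' => ?_) (fun y hy => by simp only [zero_mul]; exact S.zero_mem)
          (fun u v hu hv y hy => by simp only [add_mul]; exact S.add_mem (hu y hy) (hv y hy)) y hy
        intro y hy
        refine Submodule.iSup_induction (motive := fun y => x' * y ∈ S) _ hy
          (fun j y' hy' => ?_) (by simp only [mul_zero]; exact S.zero_mem)
          (fun u v hu hv => by simp only [mul_add]; exact S.add_mem hu hv)
        exact hhom (i + j) _ (hHmul i j x' hx'.1 y' hy'.1)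
          (by rw [map_mul]; exact hBmul i j _ hx'.2 _ hy'.2)
      have hST : S = ⊤ := by
        have hsub : Algebra.adjoin k (Set.range ι ∪ {η}) ≤ S.toSubalgebra h1S hmulS := by
          rw [Algebra.adjoin_le_iff]
          rintro z (⟨a, rfl⟩ | rfl)
          · have ha : a ∈ ⨆ j : ℤ, 𝒜 j := by
              rw [hAint.submodule_iSup_eq_top]; trivial
            exact Submodule.iSup_induction (motive := fun a => ι a ∈ S) _ ha
              (fun i a' ha' => hhom i _ (hι i a' ha')
                (by rw [hφι']; exact hfgr i a' ha'))
              (by simp only [map_zero]; exact S.zero_mem)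
              (fun u v hu hv => by simp only [map_add]; exact S.add_mem hu hv)
          · exact hhom 1 _ hη (by rw [hφη]; exact hb1)
        rw [hgen] at hsub
        exact eq_top_iff.mpr fun z _ => hsub (by trivial)
      intro i z hz
      exact (homog_mem_of_mem_iSup ℋ hHint.submodule_iSupIndep _
        (fun j => inf_le_left) hz (hST ▸ Submodule.mem_top)).2
    -- compatibility with the differentials
    have hD1 : D (1 : H) = 0 := by
      have h2 : D ((1 : H) * 1) = D 1 * 1 + ((-1 : k) ^ (0 : ℤ)) • ((1 : H) * D 1) :=
        hD.2 0 1 hH1 1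
      simp only [one_mul, mul_one, zpow_zero, one_smul] at h2
      exact left_eq_add.mp h2
    have hdB1 : dB (1 : B) = 0 := by
      have h2 : dB ((1 : B) * 1) = dB 1 * 1 + ((-1 : k) ^ (0 : ℤ)) • ((1 : B) * dB 1) :=
        hBder.2 0 1 hB1 1
      simp only [one_mul, mul_one, zpow_zero, one_smul] at h2
      exact left_eq_add.mp h2
    set L : H →ₗ[k] B := dB.comp φ.toLinearMap - φ.toLinearMap.comp D with hLdef
    have hLmem : ∀ z : H, z ∈ LinearMap.ker L ↔ dB (φ z) = φ (D z) := by
      intro z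
      rw [LinearMap.mem_ker, hLdef]
      simp [sub_eq_zero]
    set T : Submodule k H := ⨆ j : ℤ, (ℋ j ⊓ LinearMap.ker L) with hTdef
    have hhomT : ∀ j : ℤ, ∀ z ∈ ℋ j, dB (φ z) = φ (D z) → z ∈ T :=
      fun j z hz hz' => Submodule.mem_iSup_of_mem j ⟨hz, (hLmem z).mpr hz'⟩
    have h1T : (1 : H) ∈ T := hhomT 0 1 hH1 (by rw [map_one, hD1, map_zero, hdB1])
    have hmulT : ∀ x y : H, x ∈ T → y ∈ T → x * y ∈ T := by
      intro x y hx hy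
      refine Submodule.iSup_induction (motive := fun x => ∀ y ∈ T, x * y ∈ T) _ hx
        (fun i x' hx' => ?_) (fun y hy => by simp only [zero_mul]; exact T.zero_mem)
        (fun u v hu hv y hy => by simp only [add_mul]; exact T.add_mem (hu y hy) (hv y hy)) y hy
      intro y hy
      refine Submodule.iSup_induction (motive := fun y => x' * y ∈ T) _ hy
        (fun j y' hy' => ?_) (by simp only [mul_zero]; exact T.zero_mem)
        (fun u v hu hv => by simp only [mul_add]; exact T.add_mem hu hv)
      refine hhomT (i + j) _ (hHmul i j x' hx'.1 y' hy'.1) ?_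
      have e1 : D (x' * y') = D x' * y' + ((-1 : k) ^ i) • (x' * D y') :=
        hD.2 i x' hx'.1 y'
      have e2 : dB (φ x' * φ y') = dB (φ x') * φ y' + ((-1 : k) ^ i) • (φ x' * dB (φ y')) :=
        hBder.2 i (φ x') (hφgr i x' hx'.1) (φ y')
      have ex : dB (φ x') = φ (D x') := (hLmem x').mp hx'.2
      have ey : dB (φ y') = φ (D y') := (hLmem y').mp hy'.2
      rw [map_mul, e2, ex, ey, e1, map_add, map_mul, map_smul, map_mul]
    have hTT : T = ⊤ := by
      have hsub : Algebra.adjoin k (Set.range ι ∪ {η}) ≤ T.toSubalgebra h1T hmulT := by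
        rw [Algebra.adjoin_le_iff]
        rintro z (⟨a, rfl⟩ | rfl)
        · have ha : a ∈ ⨆ j : ℤ, 𝒜 j := by
            rw [hAint.submodule_iSup_eq_top]; trivial
          refine Submodule.iSup_induction (motive := fun a => ι a ∈ T) _ ha
            (fun i a' ha' => ?_)
            (by simp only [map_zero]; exact T.zero_mem)
            (fun u v hu hv => by simp only [map_add]; exact T.add_mem hu hv)
          refine hhomT i _ (hι i a' ha') ?_
          have e1 : f (d a') = dB (f a') + (b * f a' - ((-1 : k) ^ i) • (f a' * b)) :=
            hfd i a' ha'
          rw [hDι i a' ha']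
          simp only [map_sub, map_mul, map_smul, hφι', hφη]
          rw [e1]; abel
        · refine hhomT 1 _ hη ?_
          rw [hφη, hDη]
          simp only [map_sub, map_mul, hφι', hφη]
          rw [hfh]; abel
      rw [hgen] at hsub
      exact eq_top_iff.mpr fun z _ => hsub (by trivial)
    have hdg : dB.comp φ.toLinearMap = φ.toLinearMap.comp D := by
      apply LinearMap.ext
      intro z
      have hzT : z ∈ T := hTT ▸ Submodule.mem_top
      have hzK : z ∈ LinearMap.ker L :=
        (iSup_le fun j => (inf_le_right : ℋ j ⊓ LinearMap.ker L ≤ _)) hzT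
      simpa using (hLmem z).mp hzK
    refine ⟨φ, ⟨hdg, hφι, hφη⟩, ?_⟩
    rintro ψ ⟨-, h1, h2⟩
    exact hφuniq ψ ⟨h1, h2⟩
end
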